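/- arXiv:1902.09190 — 4 statements merged into one kernel-verified Lean document; each statement's English description precedes it below -/
import Mathlib

section
/- For real numbers N, N', L ≥ 0 with N > 0 and any t ≥ 0, the quantity A(t) = (e^{-t}·cosh(t)·N² - e^{-t}·sinh(t)·N'² - e^{-2t}·L) / (cosh(t)²·N² + sinh(t)²·N'² + sinh(2t)·L) satisfies A(t) ≤ 2·e^{-2t}. -/
open Real

/-- The Jacobi-field computation: for `N > 0`, `N' ≥ 0`, `L ≥ 0` and `t ≥ 0`,
`A(t) = (e^{-t} cosh t · N² − e^{-t} sinh t · N'² − e^{-2t} L) /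
        (cosh² t · N² + sinh² t · N'² + sinh(2t) · L) ≤ 2 e^{-2t}`. -/
theorem jacobi_field_ratio_bound (N N' L t : ℝ) (hN : 0 < N) (hN' : 0 ≤ N')
    (hL : 0 ≤ L) (ht : 0 ≤ t) :
    (Real.exp (-t) * Real.cosh t * N ^ 2 - Real.exp (-t) * Real.sinh t * N' ^ 2 -
        Real.exp (-2 * t) * L) /
      (Real.cosh t ^ 2 * N ^ 2 + Real.sinh t ^ 2 * N' ^ 2 + Real.sinh (2 * t) * L) ≤
      2 * Real.exp (-2 * t) := by
  have hc : (1 : ℝ) ≤ Real.cosh t := Real.one_le_cosh t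
  have hs : 0 ≤ Real.sinh t := Real.sinh_nonneg_iff.mpr ht
  have hs2 : 0 ≤ Real.sinh (2 * t) := Real.sinh_nonneg_iff.mpr (by linarith)
  have he : 0 < Real.exp (-t) := Real.exp_pos _
  have he2 : 0 < Real.exp (-2 * t) := Real.exp_pos _
  have hee : Real.exp (-2 * t) = Real.exp (-t) * Real.exp (-t) := by
    rw [← Real.exp_add]; ring_nf
  have hx : Real.exp (-t) * Real.exp t = 1 := by
    rw [← Real.exp_add]; simp
  have h1 : 1 + Real.exp (-2 * t) = 2 * Real.exp (-t) * Real.cosh t := by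
    rw [Real.cosh_eq, hee]
    field_simp
    linarith [hx]
  have hD : 0 < Real.cosh t ^ 2 * N ^ 2 + Real.sinh t ^ 2 * N' ^ 2 +
      Real.sinh (2 * t) * L := by
    have : 0 < Real.cosh t ^ 2 * N ^ 2 := by positivity
    nlinarith [sq_nonneg (Real.sinh t * N'), mul_nonneg hs2 hL]
  rw [div_le_iff₀ hD]
  have key2 : 2 * Real.exp (-2 * t) * Real.cosh t ^ 2 =
      (1 + Real.exp (-2 * t)) * (Real.exp (-t) * Real.cosh t) := by
    rw [h1, hee]; ring
  have key : Real.exp (-t) * Real.cosh t * N ^ 2 ≤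
      2 * Real.exp (-2 * t) * Real.cosh t ^ 2 * N ^ 2 := by
    rw [key2]
    nlinarith [mul_nonneg he.le (zero_le_one.trans hc), sq_nonneg N,
      mul_nonneg (mul_nonneg he2.le he.le) (mul_nonneg (zero_le_one.trans hc) (sq_nonneg N))]
  nlinarith [key, mul_nonneg (mul_nonneg he2.le hs2) hL,
    mul_nonneg (mul_nonneg he.le hs) (sq_nonneg N'),
    mul_nonneg (mul_nonneg he2.le (sq_nonneg (Real.sinh t))) (sq_nonneg N'),
    mul_le_mul_of_nonneg_right
      (le_add_of_nonneg_right he2.le : (1:ℝ) ≤ 1 + Real.exp (-2 * t))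
      (by positivity : 0 ≤ Real.exp (-t) * Real.cosh t * N ^ 2)]
end

section
/- Let (X,d) be a complete CAT(0) space and μ a positive Borel measure on X such that ∫ (1 + d(x₀,z))² dμ(z) < ∞ for some point x₀. Then the Leibniz function B_μ(x) = ∫ d(x,z)² dμ(z) is continuous on X, tends to +∞ as d(x,x₀) → ∞, attains its minimum at a unique point bar[μ] (the barycenter), and for every x ∈ X one has d(bar[μ],x)²·μ(X) ≤ B_μ(x) - B_μ(bar[μ]). -/
open MeasureTheory Filter

/-- A metric space is CAT(0) if along every geodesic segment the Euclidean comparison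
inequality holds. -/
def IsCAT0 (X : Type*) [MetricSpace X] : Prop :=
  ∀ (a b c m : X) (t : ℝ), t ∈ Set.Icc (0 : ℝ) 1 →
    dist b m = t * dist b c → dist m c = (1 - t) * dist b c →
    dist a m ^ 2 ≤
      (1 - t) * dist a b ^ 2 + t * dist a c ^ 2 - t * (1 - t) * dist b c ^ 2

/-- Existence, uniqueness and the quantitative convexity property of the barycenter of a
positive measure `μ` on a complete geodesic CAT(0) space, under the integrability hypothesis
`∫ (1 + d(x₀,z))² dμ(z) < ∞`.  The Leibniz function `B_μ(x) = ∫ d(x,z)² dμ(z)` is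
continuous, tends to `+∞` as `d(x₀,x) → ∞`, and attains its minimum at a unique point
`b = bar[μ]`, which moreover satisfies `d(b,x)²·μ(X) ≤ B_μ(x) − B_μ(b)` for all `x`. -/
theorem barycenter_CAT0 {X : Type*} [MetricSpace X] [CompleteSpace X]
    [MeasurableSpace X] [BorelSpace X] (hX : IsCAT0 X)
    (hmid : ∀ b c : X, ∃ m : X, dist b m = dist b c / 2 ∧ dist m c = dist b c / 2)
    (μ : Measure X) (x₀ : X)
    (hint : Integrable (fun z => (1 + dist x₀ z) ^ 2) μ)
    (hpos : 0 < μ Set.univ) :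
    Continuous (fun x : X => ∫ z, dist x z ^ 2 ∂μ) ∧
    Tendsto (fun x : X => ∫ z, dist x z ^ 2 ∂μ)
      (comap (fun x : X => dist x₀ x) atTop) atTop ∧
    ∃ b : X,
      (∀ x : X, (∫ z, dist b z ^ 2 ∂μ) ≤ ∫ z, dist x z ^ 2 ∂μ) ∧
      (∀ b' : X, (∀ x : X, (∫ z, dist b' z ^ 2 ∂μ) ≤ ∫ z, dist x z ^ 2 ∂μ) → b' = b) ∧
      (∀ x : X, dist b x ^ 2 * (μ Set.univ).toReal ≤
        (∫ z, dist x z ^ 2 ∂μ) - ∫ z, dist b z ^ 2 ∂μ) := by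
  classical
  set L : X → ℝ := fun x : X => ∫ z, dist x z ^ 2 ∂μ with hLdef
  set μc : ℝ := (μ Set.univ).toReal with hμcdef
  -- basic distance bound
  have key : ∀ x z : X, dist x z ≤ (1 + dist x₀ x) * (1 + dist x₀ z) := by
    intro x z
    have h := dist_triangle x x₀ z
    rw [dist_comm x x₀] at h
    have h1 := dist_nonneg (x := x₀) (y := x)
    have h2 := dist_nonneg (x := x₀) (y := z)
    nlinarith
  -- integrability of the squared distance to any point
  have hIsq : ∀ x : X, Integrable (fun z => dist x z ^ 2) μ := by
    intro x
    refine Integrable.mono' (hint.const_mul ((1 + dist x₀ x) ^ 2)) ?_ ?_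
    · exact ((continuous_const.dist continuous_id).pow 2).aestronglyMeasurable
    · filter_upwards with z
      have h0 := key x z
      have h1 := dist_nonneg (x := x₀) (y := x)
      have h2 := dist_nonneg (x := x₀) (y := z)
      have h3 := dist_nonneg (x := x) (y := z)
      rw [Real.norm_eq_abs, abs_of_nonneg (by positivity)]
      calc dist x z ^ 2 ≤ ((1 + dist x₀ x) * (1 + dist x₀ z)) ^ 2 := by nlinarith
        _ = (1 + dist x₀ x) ^ 2 * (1 + dist x₀ z) ^ 2 := by ring
  have hIlin : ∀ x : X, Integrable (fun z => dist x z) μ := by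
    intro x
    refine Integrable.mono' (hint.const_mul (1 + dist x₀ x)) ?_ ?_
    · exact (continuous_const.dist continuous_id).aestronglyMeasurable
    · filter_upwards with z
      have h0 := key x z
      have h1 := dist_nonneg (x := x₀) (y := x)
      have h2 := dist_nonneg (x := x₀) (y := z)
      rw [Real.norm_eq_abs, abs_of_nonneg dist_nonneg]
      calc dist x z ≤ (1 + dist x₀ x) * (1 + dist x₀ z) := h0
        _ ≤ (1 + dist x₀ x) * (1 + dist x₀ z) ^ 2 := by
            nlinarith [mul_nonneg (mul_nonneg (by linarith : (0:ℝ) ≤ 1 + dist x₀ x)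
              (by linarith : (0:ℝ) ≤ 1 + dist x₀ z)) h2]
  -- μ is a finite measure
  have hfin : IsFiniteMeasure μ := by
    constructor
    have h1 : Integrable (fun _ : X => (1 : ℝ)) μ := by
      refine hint.mono' aestronglyMeasurable_const ?_
      filter_upwards with z
      have h2 := dist_nonneg (x := x₀) (y := z)
      rw [Real.norm_eq_abs, abs_one]
      nlinarith
    rcases integrable_const_iff.mp h1 with h | h
    · norm_num at h
    · exact h.measure_univ_lt_top
  have hμc : 0 < μc := ENNReal.toReal_pos hpos.ne' (measure_ne_top μ _)
  -- convexity of L along "geodesic" points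
  have hconv : ∀ (b c mm : X) (t : ℝ), t ∈ Set.Icc (0 : ℝ) 1 →
      dist b mm = t * dist b c → dist mm c = (1 - t) * dist b c →
      L mm ≤ (1 - t) * L b + t * L c - t * (1 - t) * dist b c ^ 2 * μc := by
    intro b c mm t ht h1 h2
    have hpt : ∀ z, dist mm z ^ 2 ≤
        (1 - t) * dist b z ^ 2 + t * dist c z ^ 2 - t * (1 - t) * dist b c ^ 2 := by
      intro z
      have h := hX z b c mm t ht h1 h2
      rw [dist_comm z mm, dist_comm z b, dist_comm z c] at h
      exact h
    have hIb := (hIsq b).const_mul (1 - t)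
    have hIc := (hIsq c).const_mul t
    have hadd : Integrable (fun z => (1 - t) * dist b z ^ 2 + t * dist c z ^ 2) μ :=
      hIb.add hIc
    have hR : Integrable (fun z =>
        (1 - t) * dist b z ^ 2 + t * dist c z ^ 2 - t * (1 - t) * dist b c ^ 2) μ :=
      hadd.sub (integrable_const _)
    calc L mm ≤ ∫ z, ((1 - t) * dist b z ^ 2 + t * dist c z ^ 2
          - t * (1 - t) * dist b c ^ 2) ∂μ :=
        integral_mono (hIsq mm) hR fun z => hpt z
      _ = (1 - t) * L b + t * L c - t * (1 - t) * dist b c ^ 2 * μc := by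
        rw [integral_sub hadd (integrable_const _),
          integral_add hIb hIc, integral_const_mul, integral_const_mul,
          integral_const, smul_eq_mul, hLdef, hμcdef, measureReal_def]
        ring
  -- continuity of L
  have hcont : Continuous L := by
    rw [continuous_iff_continuousAt]
    intro x
    have hbound : ∀ y : X, dist x y ≤ 1 →
        |L y - L x| ≤ (2 * (∫ z, dist x z ∂μ) + μc) * dist x y := by
      intro y hy
      have hsub : L y - L x = ∫ z, (dist y z ^ 2 - dist x z ^ 2) ∂μ :=
        (integral_sub (hIsq y) (hIsq x)).symm
      rw [hsub]
      have h1 : |∫ z, (dist y z ^ 2 - dist x z ^ 2) ∂μ|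
          ≤ ∫ z, |dist y z ^ 2 - dist x z ^ 2| ∂μ := by
        simpa [Real.norm_eq_abs] using
          norm_integral_le_integral_norm (fun z => dist y z ^ 2 - dist x z ^ 2) (μ := μ)
      refine h1.trans ?_
      have hadd2 : Integrable (fun z => 2 * dist x z + 1) μ :=
        ((hIlin x).const_mul 2).add (integrable_const 1)
      have hRI : Integrable (fun z => (2 * dist x z + 1) * dist x y) μ :=
        hadd2.mul_const _
      have h2 : ∫ z, |dist y z ^ 2 - dist x z ^ 2| ∂μ
          ≤ ∫ z, (2 * dist x z + 1) * dist x y ∂μ := by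
        refine integral_mono ((hIsq y).sub (hIsq x)).abs hRI fun z => ?_
        have t1 := abs_dist_sub_le y x z
        have t2 := dist_triangle y x z
        have t3 := dist_triangle x y z
        have h4 := dist_nonneg (x := x) (y := z)
        have h5 := dist_nonneg (x := y) (y := z)
        have h6 := dist_nonneg (x := x) (y := y)
        rw [dist_comm y x] at t1 t2
        rw [abs_le] at t1 ⊢
        constructor <;> nlinarith [t1.1, t1.2]
      refine h2.trans (le_of_eq ?_)
      rw [integral_mul_const, integral_add ((hIlin x).const_mul 2) (integrable_const 1),
        integral_const_mul, integral_const, smul_eq_mul, hμcdef, measureReal_def]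
      ring
    have hC : 0 ≤ 2 * (∫ z, dist x z ∂μ) + μc := by
      have := integral_nonneg (μ := μ) (f := fun z => dist x z) fun z => dist_nonneg
      linarith
    rw [ContinuousAt, tendsto_iff_dist_tendsto_zero]
    refine squeeze_zero' (g := fun y : X => (2 * (∫ z, dist x z ∂μ) + μc) * dist x y)
      (Eventually.of_forall fun y => dist_nonneg) ?_ ?_
    · filter_upwards [Metric.closedBall_mem_nhds x one_pos] with y hy
      rw [Real.dist_eq]
      exact hbound y (by rw [dist_comm]; exact hy)
    · have hcd : Continuous (fun y : X => dist x y) :=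
        continuous_const.dist continuous_id
      have h1 : Tendsto (fun y : X => dist x y) (nhds x) (nhds 0) := by
        simpa using hcd.tendsto x
      have := h1.const_mul (2 * (∫ z, dist x z ∂μ) + μc)
      simpa using this
  -- coercivity
  have hKdef : ∃ K : ℝ, K = ∫ z, dist x₀ z ^ 2 ∂μ := ⟨_, rfl⟩
  obtain ⟨K, hK⟩ := hKdef
  have hlow : ∀ x : X, dist x₀ x ^ 2 / 2 * μc - K ≤ L x := by
    intro x
    have hpt : ∀ z, dist x₀ x ^ 2 / 2 - dist x₀ z ^ 2 ≤ dist x z ^ 2 := by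
      intro z
      have h := dist_triangle x₀ z x
      rw [dist_comm z x] at h
      have h1 := dist_nonneg (x := x₀) (y := z)
      have h2 := dist_nonneg (x := x) (y := z)
      have h3 : dist x₀ x ^ 2 ≤ (dist x₀ z + dist x z) ^ 2 :=
        pow_le_pow_left₀ dist_nonneg h 2
      nlinarith [h3, sq_nonneg (dist x₀ z - dist x z)]
    have hLI : Integrable (fun z => dist x₀ x ^ 2 / 2 - dist x₀ z ^ 2) μ :=
      (integrable_const _).sub (hIsq x₀)
    calc dist x₀ x ^ 2 / 2 * μc - K
        = ∫ z, (dist x₀ x ^ 2 / 2 - dist x₀ z ^ 2) ∂μ := by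
          rw [integral_sub (integrable_const _) (hIsq x₀), integral_const, smul_eq_mul,
            hK, hμcdef, measureReal_def]
          ring
      _ ≤ L x := integral_mono hLI (hIsq x) fun z => hpt z
  have htend : Tendsto L (comap (fun x : X => dist x₀ x) atTop) atTop := by
    have hh : Tendsto (fun r : ℝ => r ^ 2 / 2 * μc - K) atTop atTop := by
      have h1 : Tendsto (fun r : ℝ => r ^ 2) atTop atTop := tendsto_pow_atTop two_ne_zero
      have h2 := h1.atTop_mul_const (show (0 : ℝ) < μc / 2 by linarith)
      have h3 := tendsto_atTop_add_const_right atTop (-K) h2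
      refine h3.congr fun r => by ring
    exact tendsto_atTop_mono (fun x => hlow x) (hh.comp tendsto_comap)
  -- infimum and minimizing sequence
  have hLnonneg : ∀ x : X, 0 ≤ L x := fun x =>
    integral_nonneg fun z => by positivity
  have hbdd : BddBelow (Set.range L) := ⟨0, by rintro _ ⟨x, rfl⟩; exact hLnonneg x⟩
  have hne : Nonempty X := ⟨x₀⟩
  set m0 : ℝ := ⨅ x, L x with hm0def
  have hm0le : ∀ x, m0 ≤ L x := fun x => ciInf_le hbdd x
  have hex : ∀ n : ℕ, ∃ x, L x < m0 + 1 / (n + 1) := by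
    intro n
    have h1 : (0 : ℝ) < 1 / ((n : ℝ) + 1) := by positivity
    exact exists_lt_of_ciInf_lt (by linarith)
  choose u hu using hex
  -- midpoint inequality specialised
  have hmidL : ∀ b c : X, ∃ p : X,
      L p ≤ L b / 2 + L c / 2 - dist b c ^ 2 / 4 * μc := by
    intro b c
    obtain ⟨p, h1, h2⟩ := hmid b c
    refine ⟨p, ?_⟩
    have := hconv b c p (1 / 2) ⟨by norm_num, by norm_num⟩
      (by rw [h1]; ring) (by rw [h2]; ring)
    linarith
  have hcauchy : CauchySeq u := by
    refine cauchySeq_of_le_tendsto_0 (fun N => Real.sqrt (4 / μc * (1 / (N + 1)))) ?_ ?_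
    · intro n k N hn hk
      obtain ⟨p, hp⟩ := hmidL (u n) (u k)
      have h1 : m0 ≤ L p := hm0le p
      have h2 := hu n
      have h3 := hu k
      have hεn : 1 / ((n : ℝ) + 1) ≤ 1 / ((N : ℝ) + 1) := by
        apply one_div_le_one_div_of_le (by positivity)
        have : (N : ℝ) ≤ n := by exact_mod_cast hn
        linarith
      have hεk : 1 / ((k : ℝ) + 1) ≤ 1 / ((N : ℝ) + 1) := by
        apply one_div_le_one_div_of_le (by positivity)
        have : (N : ℝ) ≤ k := by exact_mod_cast hk
        linarith
      have hd2 : dist (u n) (u k) ^ 2 ≤ 4 / μc * (1 / (N + 1)) := by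
        have h4 : dist (u n) (u k) ^ 2 * μc ≤ 4 * (1 / ((N : ℝ) + 1)) := by linarith
        have h5 : dist (u n) (u k) ^ 2 ≤ 4 * (1 / ((N : ℝ) + 1)) / μc :=
          (le_div_iff₀ hμc).mpr h4
        calc dist (u n) (u k) ^ 2 ≤ 4 * (1 / ((N : ℝ) + 1)) / μc := h5
          _ = 4 / μc * (1 / ((N : ℝ) + 1)) := by ring
      rw [Real.le_sqrt dist_nonneg (by positivity)]
      exact hd2
    · have h0 : Tendsto (fun N : ℕ => 4 / μc * (1 / ((N : ℝ) + 1))) atTop (nhds 0) := by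
        have := tendsto_one_div_add_atTop_nhds_zero_nat.const_mul (4 / μc)
        simpa using this
      have := (Real.continuous_sqrt.tendsto 0).comp h0
      simpa [Function.comp_def] using this
  obtain ⟨b, hb⟩ := cauchySeq_tendsto_of_complete hcauchy
  have hLb : L b = m0 := by
    have h1 : Tendsto (fun n => L (u n)) atTop (nhds (L b)) := (hcont.tendsto b).comp hb
    have h2 : Tendsto (fun n => L (u n)) atTop (nhds m0) := by
      have hup : Tendsto (fun n : ℕ => m0 + 1 / ((n : ℝ) + 1)) atTop (nhds m0) := by
        have := tendsto_one_div_add_atTop_nhds_zero_nat.const_add m0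
        simpa using this
      refine tendsto_of_tendsto_of_tendsto_of_le_of_le tendsto_const_nhds hup
        (fun n => hm0le (u n)) (fun n => (hu n).le)
    exact tendsto_nhds_unique h1 h2
  have hmin : ∀ x : X, L b ≤ L x := fun x => hLb ▸ hm0le x
  -- variance inequality
  have hvar : ∀ x : X, dist b x ^ 2 * μc ≤ L x - L b := by
    intro x
    set d : ℝ := dist b x with hd
    let s : ℕ → X := fun n => Nat.rec x (fun _ p => Classical.choose (hmid b p)) n
    have hsstep : ∀ n, dist b (s (n + 1)) = dist b (s n) / 2 ∧
        dist (s (n + 1)) (s n) = dist b (s n) / 2 := fun n =>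
      Classical.choose_spec (hmid b (s n))
    have hsn : ∀ n, dist b (s n) = (1 / 2) ^ n * d ∧
        dist (s n) x = (1 - (1 / 2) ^ n) * d := by
      intro n
      induction n with
      | zero => simp [s, hd]
      | succ n ih =>
        obtain ⟨h1, h2⟩ := hsstep n
        have e1 : dist b (s (n + 1)) = (1 / 2) ^ (n + 1) * d := by
          rw [h1, ih.1]; ring
        refine ⟨e1, ?_⟩
        have t1 : dist (s (n + 1)) x ≤ dist (s (n + 1)) (s n) + dist (s n) x :=
          dist_triangle _ _ _
        have t2 : dist b x ≤ dist b (s (n + 1)) + dist (s (n + 1)) x :=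
          dist_triangle _ _ _
        rw [h2, ih.1, ih.2] at t1
        rw [e1] at t2
        rw [← hd] at t2
        apply le_antisymm
        · have : (1 / 2 : ℝ) ^ n * d / 2 + (1 - (1 / 2) ^ n) * d
              = (1 - (1 / 2) ^ (n + 1)) * d := by ring
          linarith
        · linarith
    have hlim : ∀ n : ℕ, (1 - (1 / 2 : ℝ) ^ n) * (d ^ 2 * μc) ≤ L x - L b := by
      intro n
      set t : ℝ := (1 / 2) ^ n with htdef
      have htpos : (0 : ℝ) < t := by positivity
      have ht1 : t ≤ 1 := pow_le_one₀ (by norm_num) (by norm_num)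
      have hc := hconv b x (s n) t ⟨le_of_lt htpos, ht1⟩ (hsn n).1 (hsn n).2
      have hb' := hmin (s n)
      have hkey : t * ((1 - t) * (d ^ 2 * μc)) ≤ t * (L x - L b) := by nlinarith
      have := le_of_mul_le_mul_left hkey htpos
      linarith
    have htendsto : Tendsto (fun n : ℕ => (1 - (1 / 2 : ℝ) ^ n) * (d ^ 2 * μc))
        atTop (nhds (d ^ 2 * μc)) := by
      have h0 : Tendsto (fun n : ℕ => (1 / 2 : ℝ) ^ n) atTop (nhds 0) :=
        tendsto_pow_atTop_nhds_zero_of_lt_one (by norm_num) (by norm_num)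
      have := ((tendsto_const_nhds (x := (1 : ℝ)) (f := atTop)).sub h0).mul_const
        (d ^ 2 * μc)
      simpa using this
    exact le_of_tendsto htendsto (Eventually.of_forall hlim)
  refine ⟨hcont, htend, b, hmin, ?_, hvar⟩
  intro b' hb'
  have h1 : L b' = L b := le_antisymm (hb' b) (hmin b')
  have h2 := hvar b'
  rw [h1] at h2
  have h4 : dist b b' ^ 2 ≤ 0 := by nlinarith [sq_nonneg (dist b b')]
  have h5 : dist b b' ^ 2 = 0 := le_antisymm h4 (sq_nonneg _)
  have h3 : dist b b' = 0 := by
    have := sq_eq_zero_iff.mp h5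
    simpa using this
  exact (dist_eq_zero.mp h3).symm
end

section
/- With a ∈ (0,1), φ a smooth transition function as above with M'' = max φ'' and T ≥ (1/δ)·(M''+4)/a for δ ∈ (0,1), the function η(t) = e^{-t}(φ((t-T)/T) + (1-φ((t-T)/T))·a) satisfies η''(t)/η(t) ≤ 1 + δ for all t; i.e., the curvature -η''/η is bounded below by -1-δ. -/
private lemma antitone_deriv_nonpos {f : ℝ → ℝ} {x : ℝ} (hf : Antitone f)
    (hd : DifferentiableAt ℝ f x) : deriv f x ≤ 0 := by
  have h := hd.hasDerivAt
  rw [hasDerivAt_iff_tendsto_slope] at h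
  have h2 : Filter.Tendsto (slope f x) (nhdsWithin x (Set.Ioi x)) (nhds (deriv f x)) :=
    h.mono_left (nhdsWithin_mono x (fun y hy => ne_of_gt hy))
  refine le_of_tendsto h2 ?_
  filter_upwards [self_mem_nhdsWithin] with y hy
  have h3 : f y - f x ≤ 0 := by linarith [hf (le_of_lt hy.out)]
  have h4 : (0:ℝ) < y - x := by linarith [hy.out]
  rw [slope_def_field]
  exact div_nonpos_of_nonpos_of_nonneg h3 h4.le

set_option maxHeartbeats 1000000 in
/-- Curvature pinching for the interpolated warping function: for `a, δ ∈ (0,1)`, a smooth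
non-increasing transition function `φ` with `M'' ≥ φ''` everywhere and
`T ≥ (1/δ)·(M''+4)/a`, the function
`η(t) = e^{-t}·(φ((t-T)/T) + (1-φ((t-T)/T))·a)` satisfies `η''(t)/η(t) ≤ 1 + δ` for all
`t`; i.e. the sectional curvature `-η''/η` is bounded below by `-1-δ`. -/
theorem interpolated_warping_curvature_pinch (a δ T M'' : ℝ)
    (ha : a ∈ Set.Ioo (0 : ℝ) 1) (hδ : δ ∈ Set.Ioo (0 : ℝ) 1)
    (φ : ℝ → ℝ) (hφ : ContDiff ℝ (⊤ : ℕ∞) φ) (hmono : Antitone φ)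
    (hrange : ∀ s, φ s ∈ Set.Icc (0 : ℝ) 1)
    (h0 : ∀ s ≤ (0 : ℝ), φ s = 1) (h1 : ∀ s : ℝ, 1 ≤ s → φ s = 0)
    (hM : ∀ s, deriv (deriv φ) s ≤ M'')
    (hT : (1 / δ) * (M'' + 4) / a ≤ T) :
    ∀ t : ℝ,
      deriv (deriv (fun u => Real.exp (-u) *
          (φ ((u - T) / T) + (1 - φ ((u - T) / T)) * a))) t /
        (Real.exp (-t) * (φ ((t - T) / T) + (1 - φ ((t - T) / T)) * a)) ≤ 1 + δ := by
  obtain ⟨ha0, ha1⟩ := ha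
  obtain ⟨hδ0, hδ1⟩ := hδ
  have hφ1 : Differentiable ℝ φ := hφ.differentiable (by simp)
  have hphiE : ContDiff ℝ ((⊤:ℕ∞):WithTop ℕ∞) φ := hφ.of_le (by simp)
  have hφ'd : Differentiable ℝ (deriv φ) :=
    (contDiff_infty_iff_deriv.mp hphiE).2.differentiable (by simp)
  -- φ' ≤ 0
  have hφ'le : ∀ s, deriv φ s ≤ 0 := fun s =>
    antitone_deriv_nonpos hmono (hφ1 s)
  -- deriv φ vanishes above 1
  have hd1 : ∀ s : ℝ, 1 < s → deriv φ s = 0 := by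
    intro s hs
    have hev : φ =ᶠ[nhds s] (fun _ => (0:ℝ)) := by
      filter_upwards [Ioi_mem_nhds hs] with y hy
      exact h1 y (le_of_lt hy.out)
    rw [hev.deriv_eq]
    simp
  -- deriv φ vanishes below 0
  have hd0 : ∀ s : ℝ, s < 0 → deriv φ s = 0 := by
    intro s hs
    have hev : φ =ᶠ[nhds s] (fun _ => (1:ℝ)) := by
      filter_upwards [Iio_mem_nhds hs] with y hy
      exact h0 y (le_of_lt hy.out)
    rw [hev.deriv_eq]
    simp
  -- M'' ≥ 0
  have hM0 : 0 ≤ M'' := by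
    have hev : deriv φ =ᶠ[nhds (-1 : ℝ)] (fun _ => (0:ℝ)) := by
      filter_upwards [Iio_mem_nhds (by norm_num : (-1:ℝ) < 0)] with y hy
      exact hd0 y hy.out
    have := hM (-1)
    rw [hev.deriv_eq] at this
    simpa using this
  -- energy estimate: (φ')² ≤ 2 M''
  have hpsi : ∀ s, deriv φ s * deriv φ s ≤ 2 * M'' := by
    have hmonoψ : Monotone (fun s => deriv φ s * deriv φ s / 2 - M'' * φ s) := by
      apply monotone_of_deriv_nonneg
      · exact (((hφ'd.mul hφ'd).div_const 2).sub (hφ1.const_mul M''))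
      · intro x
        have hx : HasDerivAt (fun s => deriv φ s * deriv φ s / 2 - M'' * φ s)
            ((deriv (deriv φ) x * deriv φ x + deriv φ x * deriv (deriv φ) x) / 2
              - M'' * deriv φ x) x :=
          ((((hφ'd x).hasDerivAt.mul (hφ'd x).hasDerivAt).div_const 2).sub
            (((hφ1 x).hasDerivAt).const_mul M''))
        rw [hx.deriv]
        nlinarith [hφ'le x, hM x]
    intro s
    have key := hmonoψ (le_max_left s 2)
    have h2lt : (1:ℝ) < max s 2 := lt_of_lt_of_le (by norm_num) (le_max_right s 2)
    have e1 : deriv φ (max s 2) = 0 := hd1 _ h2lt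
    have e2 : φ (max s 2) = 0 := h1 _ (le_of_lt h2lt)
    simp only [e1, e2] at key
    have hφs := hrange s
    nlinarith [hφs.1, hφs.2, key]
  set c := Real.sqrt (2 * M'') with hc_def
  have hc0 : 0 ≤ c := Real.sqrt_nonneg _
  have hc2 : c * c = 2 * M'' := Real.mul_self_sqrt (by linarith)
  have hφ'ge : ∀ s, -c ≤ deriv φ s := by
    intro s
    nlinarith [hpsi s, hφ'le s, hc0, hc2, sq_nonneg (deriv φ s + c), sq_nonneg (deriv φ s - c)]
  -- T bounds
  have hδa : 0 < δ * a := mul_pos hδ0 ha0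
  have keyT : δ * a * ((1 / δ) * (M'' + 4) / a) = M'' + 4 := by field_simp
  have hTδ : M'' + 4 ≤ δ * a * T := by
    calc M'' + 4 = δ * a * ((1 / δ) * (M'' + 4) / a) := keyT.symm
    _ ≤ δ * a * T := by gcongr
  have hT0 : 0 < T := by nlinarith
  have hδa1 : δ * a < 1 := by nlinarith
  have hTM : M'' + 4 ≤ T := by nlinarith [mul_lt_mul_of_pos_right hδa1 hT0]
  have hTne : T ≠ 0 := ne_of_gt hT0
  -- derivative computations
  have hst : ∀ u : ℝ, HasDerivAt (fun v => (v - T) / T) (1 / T) u := fun u =>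
    (((hasDerivAt_id u).sub_const T).div_const T).congr_deriv (by simp)
  have hc1 : ∀ u : ℝ, HasDerivAt (fun v => φ ((v - T) / T))
      (deriv φ ((u - T) / T) * (1 / T)) u := fun u =>
    ((hφ1 ((u - T) / T)).hasDerivAt).comp u (hst u)
  have hc2' : ∀ u : ℝ, HasDerivAt (fun v => deriv φ ((v - T) / T))
      (deriv (deriv φ) ((u - T) / T) * (1 / T)) u := fun u =>
    by have := ((hφ'd ((u - T) / T)).hasDerivAt).comp u (hst u); exact this
  have hg : ∀ u : ℝ, HasDerivAt (fun v => φ ((v - T) / T) + (1 - φ ((v - T) / T)) * a)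
      (deriv φ ((u - T) / T) * (1 / T) + (0 - deriv φ ((u - T) / T) * (1 / T)) * a) u :=
    fun u => (hc1 u).add (((hasDerivAt_const u (1:ℝ)).sub (hc1 u)).mul_const a)
  have hexp : ∀ u : ℝ, HasDerivAt (fun v => Real.exp (-v)) (Real.exp (-u) * (-1)) u :=
    fun u => (Real.hasDerivAt_exp (-u)).comp u ((hasDerivAt_id u).neg.congr_deriv (by simp))
  have hη1 : ∀ u : ℝ, HasDerivAt
      (fun v => Real.exp (-v) * (φ ((v - T) / T) + (1 - φ ((v - T) / T)) * a))
      (Real.exp (-u) * (-1) * (φ ((u - T) / T) + (1 - φ ((u - T) / T)) * a)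
        + Real.exp (-u) * (deriv φ ((u - T) / T) * (1 / T)
            + (0 - deriv φ ((u - T) / T) * (1 / T)) * a)) u :=
    fun u => (hexp u).mul (hg u)
  have hderiv1 : deriv (fun u => Real.exp (-u) *
      (φ ((u - T) / T) + (1 - φ ((u - T) / T)) * a)) =
      fun u => Real.exp (-u) * (-1) * (φ ((u - T) / T) + (1 - φ ((u - T) / T)) * a)
        + Real.exp (-u) * (deriv φ ((u - T) / T) * (1 / T)
            + (0 - deriv φ ((u - T) / T) * (1 / T)) * a) :=
    funext fun u => (hη1 u).deriv
  have hh : ∀ u : ℝ, HasDerivAt (fun v => deriv φ ((v - T) / T) * (1 / T)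
      + (0 - deriv φ ((v - T) / T) * (1 / T)) * a)
      (deriv (deriv φ) ((u - T) / T) * (1 / T) * (1 / T)
        + (0 - deriv (deriv φ) ((u - T) / T) * (1 / T) * (1 / T)) * a) u :=
    fun u => ((hc2' u).mul_const (1 / T)).add
      (((hasDerivAt_const u (0:ℝ)).sub ((hc2' u).mul_const (1 / T))).mul_const a)
  have hη2 : ∀ u : ℝ, HasDerivAt
      (fun v => Real.exp (-v) * (-1) * (φ ((v - T) / T) + (1 - φ ((v - T) / T)) * a)
        + Real.exp (-v) * (deriv φ ((v - T) / T) * (1 / T)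
            + (0 - deriv φ ((v - T) / T) * (1 / T)) * a))
      ((Real.exp (-u) * (-1) * (-1)) * (φ ((u - T) / T) + (1 - φ ((u - T) / T)) * a)
        + Real.exp (-u) * (-1) * (deriv φ ((u - T) / T) * (1 / T)
            + (0 - deriv φ ((u - T) / T) * (1 / T)) * a)
        + (Real.exp (-u) * (-1) * (deriv φ ((u - T) / T) * (1 / T)
            + (0 - deriv φ ((u - T) / T) * (1 / T)) * a)
          + Real.exp (-u) * (deriv (deriv φ) ((u - T) / T) * (1 / T) * (1 / T)
            + (0 - deriv (deriv φ) ((u - T) / T) * (1 / T) * (1 / T)) * a))) u :=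
    fun u => (((hexp u).mul_const (-1)).mul (hg u)).add ((hexp u).mul (hh u))
  intro t
  rw [hderiv1, (hη2 t).deriv]
  -- abbreviations
  set p := φ ((t - T) / T) with hp_def
  set P := deriv φ ((t - T) / T) with hP_def
  set Q := deriv (deriv φ) ((t - T) / T) with hQ_def
  set E := Real.exp (-t) with hE_def
  have hE : 0 < E := Real.exp_pos _
  have hp0 : 0 ≤ p := (hrange _).1
  have hp1 : p ≤ 1 := (hrange _).2
  have hG : a ≤ p + (1 - p) * a := by nlinarith
  have hGpos : 0 < p + (1 - p) * a := lt_of_lt_of_le ha0 hG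
  have hQM : Q ≤ M'' := hM _
  have hPc : -c ≤ P := hφ'ge _
  have hP0 : P ≤ 0 := hφ'le _
  -- key inequality
  have key : (1 - a) * (Q - 2 * P * T) ≤ δ * ((p + (1 - p) * a) * T ^ 2) := by
    have h2c : 2 * c ≤ M'' + 2 := by nlinarith [sq_nonneg (c - 2)]
    have hδG : δ * a * T ^ 2 ≤ δ * ((p + (1 - p) * a) * T ^ 2) := by
      have : 0 ≤ δ * T ^ 2 := by positivity
      nlinarith
    rcases le_or_gt (Q - 2 * P * T) 0 with hX | hX
    · nlinarith [mul_pos hδa (mul_pos hT0 hT0)]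
    · have step1 : (1 - a) * (Q - 2 * P * T) ≤ Q - 2 * P * T := by nlinarith
      have step2 : Q - 2 * P * T ≤ M'' + (M'' + 2) * T := by
        nlinarith [mul_nonneg (by linarith : (0:ℝ) ≤ M'' + 2 - 2 * c) hT0.le,
          mul_nonneg (by linarith : (0:ℝ) ≤ c + P) hT0.le]
      have step3 : M'' + (M'' + 2) * T ≤ δ * a * T ^ 2 := by
        nlinarith [mul_le_mul_of_nonneg_right hTδ hT0.le]
      linarith
  rw [div_le_iff₀ (by positivity)]
  rw [← sub_nonneg]
  have hfinal : E * ((1 - a) * (Q - 2 * P * T)) ≤ E * (δ * ((p + (1 - p) * a) * T ^ 2)) :=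
    mul_le_mul_of_nonneg_left key hE.le
  have hrw : (1 + δ) * (E * (p + (1 - p) * a)) -
      ((E * (-1) * (-1)) * (p + (1 - p) * a)
        + E * (-1) * (P * (1 / T) + (0 - P * (1 / T)) * a)
        + (E * (-1) * (P * (1 / T) + (0 - P * (1 / T)) * a)
          + E * (Q * (1 / T) * (1 / T) + (0 - Q * (1 / T) * (1 / T)) * a)))
      = (E * (δ * ((p + (1 - p) * a) * T ^ 2)) - E * ((1 - a) * (Q - 2 * P * T))) / T ^ 2 := by
    field_simp
    ring
  rw [hrw]
  apply div_nonneg (by linarith) (by positivity)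
end

section
/- Let U, V be n-dimensional real inner product spaces, F : U → V a linear isomorphism, h^Y a positive bilinear form on U with trace-1 associated endomorphism H^Y, and h^X, k^X positive bilinear forms on V with associated endomorphisms H^X, K^X (K^X invertible). If |k^X(F(u),v)| ≤ C·h^Y(u,u)^{1/2}·h^X(v,v)^{1/2} for all u ∈ U, v ∈ V, then |det K^X|·|det F| ≤ Cⁿ·((1/n)·Tr H^Y)^{n/2}·(det H^X)^{1/2}. In particular |det F| ≤ (Cⁿ/n^{n/2})·(det H^X)^{1/2}/|det K^X|. -/
open scoped RealInnerProductSpace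

namespace BarycenterAux

variable {n : ℕ}

local notation "E" => EuclideanSpace ℝ (Fin n)

lemma inner_eq_sum_repr (b : OrthonormalBasis (Fin n) ℝ E) (x y : E) :
    ⟪x, y⟫ = ∑ i, b.repr x i * b.repr y i := by
  rw [← b.repr.inner_map_map x y]
  simp only [PiLp.inner_apply, RCLike.inner_apply, conj_trivial]
  exact Finset.sum_congr rfl fun _ _ => mul_comm _ _

lemma norm_sq_eq_sum_repr (b : OrthonormalBasis (Fin n) ℝ E) (x : E) :
    ‖x‖ ^ 2 = ∑ i, b.repr x i * b.repr x i := by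
  rw [← real_inner_self_eq_norm_sq, inner_eq_sum_repr b]

lemma repr_of_diag (b : OrthonormalBasis (Fin n) ℝ E) (T : E →ₗ[ℝ] E) (d : Fin n → ℝ)
    (h : ∀ i, T (b i) = d i • b i) (x : E) (i : Fin n) :
    b.repr (T x) i = d i * b.repr x i := by
  have hx : T x = ∑ j, (b.repr x j * d j) • b j := by
    conv_lhs => rw [← b.sum_repr x]
    rw [map_sum]
    refine Finset.sum_congr rfl fun j _ => ?_
    rw [map_smul, h j, smul_smul]
  rw [hx, map_sum, WithLp.ofLp_sum, Finset.sum_apply i Finset.univ _]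
  simp [OrthonormalBasis.repr_self, EuclideanSpace.single_apply, mul_comm]

lemma toMatrix_of_diag (b : OrthonormalBasis (Fin n) ℝ E) (T : E →ₗ[ℝ] E) (d : Fin n → ℝ)
    (h : ∀ i, T (b i) = d i • b i) :
    LinearMap.toMatrix b.toBasis b.toBasis T = Matrix.diagonal d := by
  ext i j
  rw [LinearMap.toMatrix_apply, OrthonormalBasis.coe_toBasis, OrthonormalBasis.coe_toBasis_repr_apply]
  simp [h j, OrthonormalBasis.repr_self, EuclideanSpace.single_apply, Matrix.diagonal]
  rcases eq_or_ne i j with rfl | hij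
  · simp
  · simp [hij, Ne.symm hij]

lemma det_of_diag (b : OrthonormalBasis (Fin n) ℝ E) (T : E →ₗ[ℝ] E) (d : Fin n → ℝ)
    (h : ∀ i, T (b i) = d i • b i) :
    LinearMap.det T = ∏ i, d i := by
  rw [← LinearMap.det_toMatrix b.toBasis, toMatrix_of_diag b T d h, Matrix.det_diagonal]

lemma trace_of_diag (b : OrthonormalBasis (Fin n) ℝ E) (T : E →ₗ[ℝ] E) (d : Fin n → ℝ)
    (h : ∀ i, T (b i) = d i • b i) :
    LinearMap.trace ℝ E T = ∑ i, d i := by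
  rw [LinearMap.trace_eq_matrix_trace ℝ b.toBasis, toMatrix_of_diag b T d h,
    Matrix.trace_diagonal]

/-- The linear map that is diagonal with entries `c` in the orthonormal basis `b`. -/
noncomputable def diagMap (b : OrthonormalBasis (Fin n) ℝ E) (c : Fin n → ℝ) : E →ₗ[ℝ] E :=
  b.toBasis.constr ℝ (fun i => c i • b i)

lemma diagMap_apply_basis (b : OrthonormalBasis (Fin n) ℝ E) (c : Fin n → ℝ) (i : Fin n) :
    diagMap b c (b i) = c i • b i := by
  have := b.toBasis.constr_basis ℝ (fun i => c i • b i) i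
  simpa [diagMap] using this

lemma repr_diagMap (b : OrthonormalBasis (Fin n) ℝ E) (c : Fin n → ℝ) (x : E) (i : Fin n) :
    b.repr (diagMap b c x) i = c i * b.repr x i :=
  repr_of_diag b (diagMap b c) c (diagMap_apply_basis b c) x i

lemma det_diagMap (b : OrthonormalBasis (Fin n) ℝ E) (c : Fin n → ℝ) :
    LinearMap.det (diagMap b c) = ∏ i, c i :=
  det_of_diag b (diagMap b c) c (diagMap_apply_basis b c)

lemma diagMap_symm (b : OrthonormalBasis (Fin n) ℝ E) (c : Fin n → ℝ) (x y : E) :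
    ⟪diagMap b c x, y⟫ = ⟪x, diagMap b c y⟫ := by
  rw [inner_eq_sum_repr b, inner_eq_sum_repr b]
  refine Finset.sum_congr rfl fun i _ => ?_
  rw [repr_diagMap, repr_diagMap]
  ring

lemma inner_diag_diagMap (b : OrthonormalBasis (Fin n) ℝ E) (T : E →ₗ[ℝ] E) (d : Fin n → ℝ)
    (hT : ∀ i, T (b i) = d i • b i) (c : Fin n → ℝ) (hdc : ∀ i, d i * c i ^ 2 = 1) (x : E) :
    ⟪T (diagMap b c x), diagMap b c x⟫ = ‖x‖ ^ 2 := by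
  rw [inner_eq_sum_repr b, norm_sq_eq_sum_repr b]
  refine Finset.sum_congr rfl fun i _ => ?_
  rw [repr_of_diag b T d hT, repr_diagMap]
  nlinarith [hdc i]

/-- Determinant bound for a symmetric map with quadratic form between `0` and `c‖x‖²`. -/
lemma det_le_of_quadratic (T : E →ₗ[ℝ] E) (hT : T.IsSymmetric) (c : ℝ)
    (h1 : ∀ x, 0 ≤ ⟪T x, x⟫) (h2 : ∀ x, ⟪T x, x⟫ ≤ c * ‖x‖ ^ 2) :
    0 ≤ LinearMap.det T ∧ LinearMap.det T ≤ c ^ n := by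
  have hrank : Module.finrank ℝ (EuclideanSpace ℝ (Fin n)) = n := finrank_euclideanSpace_fin
  set b := hT.eigenvectorBasis hrank with hb
  set d := hT.eigenvalues hrank with hd
  have hdiag : ∀ i, T (b i) = d i • b i := fun i => hT.apply_eigenvectorBasis hrank i
  have hnorm : ∀ i, ‖b i‖ = 1 := fun i => b.orthonormal.1 i
  have hval : ∀ i, ⟪T (b i), b i⟫ = d i := by
    intro i
    rw [hdiag i, real_inner_smul_left, real_inner_self_eq_norm_sq, hnorm i]
    ring
  have hdet : LinearMap.det T = ∏ i, d i := det_of_diag b T d hdiag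
  constructor
  · rw [hdet]
    exact Finset.prod_nonneg fun i _ => by rw [← hval i]; exact h1 (b i)
  · rw [hdet]
    calc ∏ i, d i ≤ ∏ _i : Fin n, c := by
          refine Finset.prod_le_prod (fun i _ => by rw [← hval i]; exact h1 (b i)) ?_
          intro i _
          have := h2 (b i)
          rw [hval i, hnorm i] at this
          simpa using this
      _ = c ^ n := by simp

lemma det_adjoint (S : E →ₗ[ℝ] E) :
    LinearMap.det (LinearMap.adjoint S) = LinearMap.det S := by
  let b := EuclideanSpace.basisFun (Fin n) ℝ
  rw [← LinearMap.det_toMatrix b.toBasis, ← LinearMap.det_toMatrix b.toBasis S,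
    LinearMap.toMatrix_adjoint, Matrix.det_conjTranspose, star_trivial]

/-- `|det S| ≤ Cⁿ` for an operator with bilinear bound `C‖x‖‖y‖`. -/
lemma abs_det_le_of_bilinear_bound (S : E →ₗ[ℝ] E) (C : ℝ) (hC : 0 ≤ C)
    (h : ∀ x y, |⟪S x, y⟫| ≤ C * ‖x‖ * ‖y‖) :
    |LinearMap.det S| ≤ C ^ n := by
  set P := LinearMap.adjoint S ∘ₗ S with hP
  have hPx : ∀ x, ⟪P x, x⟫ = ‖S x‖ ^ 2 := by
    intro x
    rw [hP, LinearMap.comp_apply, LinearMap.adjoint_inner_left,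
      real_inner_self_eq_norm_sq]
  have hPs : P.IsSymmetric := by
    intro x y
    rw [hP, LinearMap.comp_apply, LinearMap.comp_apply, LinearMap.adjoint_inner_left,
      LinearMap.adjoint_inner_right]
  have hSnorm : ∀ x, ‖S x‖ ≤ C * ‖x‖ := by
    intro x
    rcases eq_or_lt_of_le (norm_nonneg (S x)) with h0 | h0
    · rw [← h0]; positivity
    · have := h x (S x)
      rw [real_inner_self_eq_norm_sq, abs_of_nonneg (by positivity)] at this
      have := (mul_le_mul_iff_left₀ h0).mp (by nlinarith : ‖S x‖ * ‖S x‖ ≤ (C * ‖x‖) * ‖S x‖)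
      linarith
  have hdP := det_le_of_quadratic P hPs (C ^ 2)
    (fun x => by rw [hPx]; positivity)
    (fun x => by
      rw [hPx]
      have := hSnorm x
      nlinarith [norm_nonneg (S x), norm_nonneg x])
  have hdetP : LinearMap.det P = LinearMap.det S ^ 2 := by
    rw [hP, LinearMap.det_comp, det_adjoint]; ring
  have h2 : LinearMap.det S ^ 2 ≤ (C ^ n) ^ 2 := by
    rw [← hdetP]
    calc LinearMap.det P ≤ (C ^ 2) ^ n := hdP.2
      _ = (C ^ n) ^ 2 := by ring
  calc |LinearMap.det S| = Real.sqrt (LinearMap.det S ^ 2) := (Real.sqrt_sq_eq_abs _).symm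
    _ ≤ Real.sqrt ((C ^ n) ^ 2) := Real.sqrt_le_sqrt h2
    _ = C ^ n := Real.sqrt_sq (by positivity)

end BarycenterAux

open BarycenterAux

/-- The determinant estimate of the barycenter method (linear-algebra core): on an
`n`-dimensional Euclidean space, let `F` be a linear isomorphism, `H^Y, H^X, K^X`
symmetric positive endomorphisms (representing positive bilinear forms, `K^X`
invertible), and suppose
`|⟪K^X (F u), v⟫| ≤ C·⟪H^Y u, u⟫^{1/2}·⟪H^X v, v⟫^{1/2}` for all `u, v`.  Then
`|det K^X|·|det F| ≤ Cⁿ·((Tr H^Y)/n)^{n/2}·(det H^X)^{1/2}`, and in particular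
`|det F| ≤ (Cⁿ/n^{n/2})·(det H^X)^{1/2}/|det K^X|` when `Tr H^Y = 1`. -/
theorem barycenter_jacobian_linear_algebra (n : ℕ) (hn : 0 < n)
    (F HY HX KX : EuclideanSpace ℝ (Fin n) →ₗ[ℝ] EuclideanSpace ℝ (Fin n))
    (hF : Function.Bijective F)
    (hHYs : HY.IsSymmetric) (hHXs : HX.IsSymmetric) (hKXs : KX.IsSymmetric)
    (hHYpos : ∀ u, 0 ≤ ⟪HY u, u⟫) (hHXpos : ∀ v, 0 ≤ ⟪HX v, v⟫)
    (hKXpos : ∀ v, 0 ≤ ⟪KX v, v⟫) (hKXinv : Function.Bijective KX)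
    (C : ℝ) (hC : 0 < C)
    (hbound : ∀ u v, |⟪KX (F u), v⟫| ≤
      C * Real.sqrt ⟪HY u, u⟫ * Real.sqrt ⟪HX v, v⟫) :
    |LinearMap.det KX| * |LinearMap.det F| ≤
      C ^ n * ((LinearMap.trace ℝ (EuclideanSpace ℝ (Fin n)) HY / n) ^ ((n : ℝ) / 2)) *
        Real.sqrt (LinearMap.det HX) ∧
    (LinearMap.trace ℝ (EuclideanSpace ℝ (Fin n)) HY = 1 →
      |LinearMap.det F| ≤
        (C ^ n / (n : ℝ) ^ ((n : ℝ) / 2)) * Real.sqrt (LinearMap.det HX) /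
          |LinearMap.det KX|) := by
  have hrank : Module.finrank ℝ (EuclideanSpace ℝ (Fin n)) = n := finrank_euclideanSpace_fin
  set bX := hHXs.eigenvectorBasis hrank with hbX
  set μ := hHXs.eigenvalues hrank with hμ
  set bY := hHYs.eigenvectorBasis hrank with hbY
  set ν := hHYs.eigenvalues hrank with hν
  have hXdiag : ∀ i, HX (bX i) = μ i • bX i := fun i => hHXs.apply_eigenvectorBasis hrank i
  have hYdiag : ∀ j, HY (bY j) = ν j • bY j := fun j => hHYs.apply_eigenvectorBasis hrank j
  have hbXnorm : ∀ i, ‖bX i‖ = 1 := fun i => bX.orthonormal.1 i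
  have hbYnorm : ∀ j, ‖bY j‖ = 1 := fun j => bY.orthonormal.1 j
  have hXval : ∀ i, ⟪HX (bX i), bX i⟫ = μ i := by
    intro i
    rw [hXdiag i, real_inner_smul_left, real_inner_self_eq_norm_sq, hbXnorm i]; ring
  have hYval : ∀ j, ⟪HY (bY j), bY j⟫ = ν j := by
    intro j
    rw [hYdiag j, real_inner_smul_left, real_inner_self_eq_norm_sq, hbYnorm j]; ring
  -- positivity of eigenvalues
  have hμpos : ∀ i, 0 < μ i := by
    intro i
    have h0le : 0 ≤ μ i := by rw [← hXval i]; exact hHXpos (bX i)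
    rcases eq_or_lt_of_le h0le with h0 | h0
    · exfalso
      obtain ⟨u, hu⟩ := (hKXinv.2.comp hF.2 :
        Function.Surjective (KX ∘ F)) (bX i)
      have hb := hbound u (bX i)
      rw [Function.comp_apply] at hu
      rw [hu] at hb
      rw [hXval i, ← h0] at hb
      simp only [Real.sqrt_zero, mul_zero] at hb
      have : ⟪(bX i : EuclideanSpace ℝ (Fin n)), bX i⟫ = 1 := by
        rw [real_inner_self_eq_norm_sq, hbXnorm i]; norm_num
      rw [this] at hb
      norm_num at hb
    · exact h0
  have hνpos : ∀ j, 0 < ν j := by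
    intro j
    have h0le : 0 ≤ ν j := by rw [← hYval j]; exact hHYpos (bY j)
    rcases eq_or_lt_of_le h0le with h0 | h0
    · exfalso
      have hb := hbound (bY j) (KX (F (bY j)))
      rw [hYval j, ← h0] at hb
      simp only [Real.sqrt_zero, mul_zero, zero_mul] at hb
      have hz : KX (F (bY j)) = 0 := by
        have : ⟪KX (F (bY j)), KX (F (bY j))⟫ = 0 := le_antisymm (by
          have := abs_nonneg (⟪KX (F (bY j)), KX (F (bY j))⟫)
          calc ⟪KX (F (bY j)), KX (F (bY j))⟫ ≤ |⟪KX (F (bY j)), KX (F (bY j))⟫| := le_abs_self _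
            _ ≤ 0 := hb) real_inner_self_nonneg
        exact inner_self_eq_zero.mp this
      have h1 : F (bY j) = 0 := hKXinv.1 (by rw [hz, map_zero])
      have h2 : (bY j : EuclideanSpace ℝ (Fin n)) = 0 := hF.1 (by rw [h1, map_zero])
      have := hbYnorm j
      rw [h2] at this
      simp at this
    · exact h0
  -- square-root-inverse diagonal maps
  set cX : Fin n → ℝ := fun i => (Real.sqrt (μ i))⁻¹ with hcX
  set cY : Fin n → ℝ := fun j => (Real.sqrt (ν j))⁻¹ with hcY
  have hcXpos : ∀ i, 0 < cX i := fun i => by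
    rw [hcX]; exact inv_pos.mpr (Real.sqrt_pos.mpr (hμpos i))
  have hcYpos : ∀ j, 0 < cY j := fun j => by
    rw [hcY]; exact inv_pos.mpr (Real.sqrt_pos.mpr (hνpos j))
  have hμcX : ∀ i, μ i * cX i ^ 2 = 1 := by
    intro i
    have h1 : cX i = (Real.sqrt (μ i))⁻¹ := rfl
    rw [h1, inv_pow, Real.sq_sqrt (hμpos i).le]
    exact mul_inv_cancel₀ (hμpos i).ne'
  have hνcY : ∀ j, ν j * cY j ^ 2 = 1 := by
    intro j
    have h1 : cY j = (Real.sqrt (ν j))⁻¹ := rfl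
    rw [h1, inv_pow, Real.sq_sqrt (hνpos j).le]
    exact mul_inv_cancel₀ (hνpos j).ne'
  set Ai := diagMap bX cX with hAi
  set Bi := diagMap bY cY with hBi
  set S := Ai ∘ₗ KX ∘ₗ F ∘ₗ Bi with hS
  -- the bilinear bound for S
  have hSbound : ∀ x y, |⟪S x, y⟫| ≤ C * ‖x‖ * ‖y‖ := by
    intro x y
    have e1 : ⟪S x, y⟫ = ⟪KX (F (Bi x)), Ai y⟫ := by
      rw [hS]
      simp only [LinearMap.comp_apply]
      rw [diagMap_symm]
    rw [e1]
    calc |⟪KX (F (Bi x)), Ai y⟫| ≤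
        C * Real.sqrt ⟪HY (Bi x), Bi x⟫ * Real.sqrt ⟪HX (Ai y), Ai y⟫ := hbound _ _
      _ = C * ‖x‖ * ‖y‖ := by
          rw [hBi, hAi, inner_diag_diagMap bY HY ν hYdiag cY hνcY,
            inner_diag_diagMap bX HX μ hXdiag cX hμcX,
            Real.sqrt_sq (norm_nonneg x), Real.sqrt_sq (norm_nonneg y)]
  have hSdet : |LinearMap.det S| ≤ C ^ n := abs_det_le_of_bilinear_bound S C hC.le hSbound
  -- determinant computations
  have hdetS : LinearMap.det S =
      (∏ i, cX i) * (LinearMap.det KX * (LinearMap.det F * ∏ j, cY j)) := by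
    rw [hS, LinearMap.det_comp, LinearMap.det_comp, LinearMap.det_comp,
      hAi, hBi, det_diagMap, det_diagMap]
  have hdetHX : LinearMap.det HX = ∏ i, μ i := det_of_diag bX HX μ hXdiag
  have htrHY : LinearMap.trace ℝ (EuclideanSpace ℝ (Fin n)) HY = ∑ j, ν j :=
    trace_of_diag bY HY ν hYdiag
  set PX : ℝ := ∏ i, Real.sqrt (μ i) with hPX
  set PY : ℝ := ∏ j, Real.sqrt (ν j) with hPY
  have hPXpos : 0 < PX := Finset.prod_pos fun i _ => Real.sqrt_pos.mpr (hμpos i)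
  have hPYpos : 0 < PY := Finset.prod_pos fun j _ => Real.sqrt_pos.mpr (hνpos j)
  have hprodcX : ∏ i, cX i = PX⁻¹ := by
    rw [hPX, ← Finset.prod_inv_distrib]
  have hprodcY : ∏ j, cY j = PY⁻¹ := by
    rw [hPY, ← Finset.prod_inv_distrib]
  -- PX = sqrt (det HX)
  have hPXsq : PX ^ 2 = ∏ i, μ i := by
    rw [hPX, ← Finset.prod_pow]
    exact Finset.prod_congr rfl fun i _ => Real.sq_sqrt (hμpos i).le
  have hPXeq : PX = Real.sqrt (LinearMap.det HX) := by
    rw [hdetHX, ← hPXsq, Real.sqrt_sq hPXpos.le]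
  have hPYsq : PY ^ 2 = ∏ j, ν j := by
    rw [hPY, ← Finset.prod_pow]
    exact Finset.prod_congr rfl fun j _ => Real.sq_sqrt (hνpos j).le
  -- the key inequality |det KX| |det F| ≤ C^n * PX * PY
  have hmain : |LinearMap.det KX| * |LinearMap.det F| ≤ C ^ n * PX * PY := by
    have habs : |LinearMap.det S| =
        PX⁻¹ * (|LinearMap.det KX| * (|LinearMap.det F| * PY⁻¹)) := by
      rw [hdetS, hprodcX, hprodcY, abs_mul, abs_mul, abs_mul,
        abs_of_pos (inv_pos.mpr hPXpos), abs_of_pos (inv_pos.mpr hPYpos)]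
    have this : PX⁻¹ * (|LinearMap.det KX| * (|LinearMap.det F| * PY⁻¹)) ≤ C ^ n := by
      rw [← habs]; exact hSdet
    calc |LinearMap.det KX| * |LinearMap.det F|
        = (PX⁻¹ * (|LinearMap.det KX| * (|LinearMap.det F| * PY⁻¹))) * PX * PY := by
          field_simp
      _ ≤ C ^ n * PX * PY := by
          apply mul_le_mul_of_nonneg_right _ hPYpos.le
          apply mul_le_mul_of_nonneg_right _ hPXpos.le
          exact this
  -- AM-GM: ∏ ν ≤ ((∑ ν)/n)^n
  have hsumν : 0 ≤ ∑ j, ν j := Finset.sum_nonneg fun j _ => (hνpos j).le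
  have hamgm : ∏ j, ν j ≤ ((∑ j, ν j) / n) ^ n := by
    have h1 : ∏ j, (ν j) ^ ((1 : ℝ) / n) ≤ ∑ j, (1 / (n : ℝ)) * ν j := by
      apply Real.geom_mean_le_arith_mean_weighted
      · intro i _; positivity
      · rw [Finset.sum_const, Finset.card_univ, Fintype.card_fin, nsmul_eq_mul]
        field_simp
      · intro j _; exact (hνpos j).le
    have h2 : ∑ j, (1 / (n : ℝ)) * ν j = (∑ j, ν j) / n := by
      rw [← Finset.mul_sum]; ring
    have h3 : (∏ j, (ν j) ^ ((1 : ℝ) / n)) ^ n = ∏ j, ν j := by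
      rw [← Finset.prod_pow]
      refine Finset.prod_congr rfl fun j _ => ?_
      rw [← Real.rpow_natCast ((ν j) ^ ((1:ℝ)/n)) n, ← Real.rpow_mul (hνpos j).le]
      rw [one_div, inv_mul_cancel₀ (by exact_mod_cast hn.ne'), Real.rpow_one]
    calc ∏ j, ν j = (∏ j, (ν j) ^ ((1 : ℝ) / n)) ^ n := h3.symm
      _ ≤ ((∑ j, ν j) / n) ^ n := by
          apply pow_le_pow_left₀
            (Finset.prod_nonneg fun j _ => Real.rpow_nonneg (hνpos j).le _)
          rw [← h2]; exact h1
  have hPYle : PY ≤ ((∑ j, ν j) / n) ^ ((n : ℝ) / 2) := by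
    have hq : 0 ≤ (∑ j, ν j) / n := by positivity
    have : PY = Real.sqrt (∏ j, ν j) := by
      rw [← hPYsq, Real.sqrt_sq hPYpos.le]
    rw [this]
    calc Real.sqrt (∏ j, ν j) ≤ Real.sqrt (((∑ j, ν j) / n) ^ n) := Real.sqrt_le_sqrt hamgm
      _ = ((∑ j, ν j) / n) ^ ((n : ℝ) / 2) := by
          rw [Real.sqrt_eq_rpow, ← Real.rpow_natCast ((∑ j, ν j) / n) n,
            ← Real.rpow_mul hq]
          congr 1
          ring
  have part1 : |LinearMap.det KX| * |LinearMap.det F| ≤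
      C ^ n * ((LinearMap.trace ℝ (EuclideanSpace ℝ (Fin n)) HY / n) ^ ((n : ℝ) / 2)) *
        Real.sqrt (LinearMap.det HX) := by
    rw [htrHY, ← hPXeq]
    calc |LinearMap.det KX| * |LinearMap.det F| ≤ C ^ n * PX * PY := hmain
      _ ≤ C ^ n * PX * (((∑ j, ν j) / n) ^ ((n : ℝ) / 2)) := by
          apply mul_le_mul_of_nonneg_left hPYle (by positivity)
      _ = C ^ n * (((∑ j, ν j) / n) ^ ((n : ℝ) / 2)) * PX := by ring
  refine ⟨part1, fun htr => ?_⟩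
  have hdetKX : LinearMap.det KX ≠ 0 := by
    intro h0
    have := LinearMap.range_lt_top_of_det_eq_zero h0
    rw [LinearMap.range_eq_top.mpr hKXinv.2] at this
    exact lt_irrefl _ this
  have hKXabs : 0 < |LinearMap.det KX| := abs_pos.mpr hdetKX
  rw [htr] at part1
  have hsimp : ((1 : ℝ) / n) ^ ((n : ℝ) / 2) = 1 / (n : ℝ) ^ ((n : ℝ) / 2) := by
    rw [Real.div_rpow zero_le_one (by positivity), Real.one_rpow]
  rw [le_div_iff₀ hKXabs]
  calc |LinearMap.det F| * |LinearMap.det KX|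
      = |LinearMap.det KX| * |LinearMap.det F| := mul_comm _ _
    _ ≤ C ^ n * ((1 / (n : ℝ)) ^ ((n : ℝ) / 2)) * Real.sqrt (LinearMap.det HX) := part1
    _ = C ^ n / (n : ℝ) ^ ((n : ℝ) / 2) * Real.sqrt (LinearMap.det HX) := by
        rw [hsimp]; ring
end
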